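/- Let d, m, c, e be integers with d = 2c + e, e ∈ {0,1}, m ≥ 1, 16m ≤ 5d and 3d < 10m. Set a = 5m - 3c - e and b = 5m + a - 3c - e. Then twice the virtual dimension 2v = (2m+a)(2m+a+3) - 4m(m+1) - 2b(b+1) - 2(b-e)(b-e+1) satisfies 2v = (5m-3c)(45c-71m) + (15c-23m) + 6e(31m-19c-3), and moreover 2v ≥ 0. -/

import Mathlib

/-!
Write `t = 5m - 3c`, so that `a = t - e` and `b = 2a`. For `e = 0` twice the virtual dimension is
`t(4m - 15t) + 2m - 5t`, and the hypotheses say exactly `1 ≤ t` and `5t ≤ m`; substituting `m ≥ 5t`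
bounds it below by `5t² + 5t`. For `e = 1` it is `2m(2t - 1) - 15t² + 33t - 18`, the hypotheses say
`2 ≤ t` and `2m ≥ 10t - 15`, and the same substitution gives `5t² - 7t - 3 ≥ 3`.
-/

/-- Twice the virtual dimension of `L(2m+a; m^4, [b,b-e]^2)`. -/
def twiceVirtDim (m a b e : ℤ) : ℤ :=
  (2*m + a) * (2*m + a + 3) - 4 * m * (m + 1) - 2 * b * (b + 1) - 2 * (b - e) * (b - e + 1)

lemma twiceVirtDim_even (m t : ℤ) :
    twiceVirtDim m t (2 * t) 0 = t * (4 * m - 15 * t) + 2 * m - 5 * t := by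
  unfold twiceVirtDim; ring

lemma twiceVirtDim_odd (m t : ℤ) :
    twiceVirtDim m (t - 1) (2 * (t - 1)) 1 = 2 * m * (2 * t - 1) - 15 * t ^ 2 + 33 * t - 18 := by
  unfold twiceVirtDim; ring

lemma twiceVirtDim_even_nonneg {m t : ℤ} (ht : 1 ≤ t) (hm : 5 * t ≤ m) :
    0 ≤ twiceVirtDim m t (2 * t) 0 := by
  rw [twiceVirtDim_even]
  nlinarith [mul_le_mul_of_nonneg_left hm (by omega : (0 : ℤ) ≤ t)]

lemma twiceVirtDim_odd_nonneg {m t : ℤ} (ht : 2 ≤ t) (hm : 10 * t - 15 ≤ 2 * m) :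
    0 ≤ twiceVirtDim m (t - 1) (2 * (t - 1)) 1 := by
  rw [twiceVirtDim_odd]
  nlinarith [mul_le_mul_of_nonneg_left hm (by omega : (0 : ℤ) ≤ 2 * t - 1)]

lemma twiceVirtDim_eq {m c e : ℤ} (he : e = 0 ∨ e = 1) :
    twiceVirtDim m (5 * m - 3 * c - e) (2 * (5 * m - 3 * c - e)) e
      = (5*m - 3*c) * (45*c - 71*m) + (15*c - 23*m) + 6 * e * (31*m - 19*c - 3) := by
  rcases he with rfl | rfl <;> unfold twiceVirtDim <;> ring

lemma twiceVirtDim_nonneg {m c e : ℤ} (he : e = 0 ∨ e = 1)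
    (h1 : 16 * m ≤ 5 * (2 * c + e)) (h2 : 3 * (2 * c + e) < 10 * m) :
    0 ≤ twiceVirtDim m (5 * m - 3 * c - e) (2 * (5 * m - 3 * c - e)) e := by
  rcases he with rfl | rfl
  · simpa using twiceVirtDim_even_nonneg (t := 5 * m - 3 * c) (by omega) (by omega)
  · exact twiceVirtDim_odd_nonneg (by omega) (by omega)

theorem stmt4_general (d m c e a b : ℤ) (hde : d = 2 * c + e) (he : e = 0 ∨ e = 1)
    (h1 : 16 * m ≤ 5 * d) (h2 : 3 * d < 10 * m)
    (ha : a = 5 * m - 3 * c - e) (hb : b = 5 * m + a - 3 * c - e) :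
    (2*m + a) * (2*m + a + 3) - 4 * m * (m + 1)
        - 2 * b * (b + 1) - 2 * (b - e) * (b - e + 1)
      = (5*m - 3*c) * (45*c - 71*m) + (15*c - 23*m) + 6 * e * (31*m - 19*c - 3) ∧
    0 ≤ (2*m + a) * (2*m + a + 3) - 4 * m * (m + 1)
        - 2 * b * (b + 1) - 2 * (b - e) * (b - e + 1) := by
  subst hde
  have hb2 : b = 2 * a := by rw [hb, ha]; ring
  subst hb2 ha
  exact ⟨twiceVirtDim_eq he, twiceVirtDim_nonneg he h1 h2⟩

/-- For `d = 2c+e`, `e ∈ {0,1}`, `m ≥ 1`, `16m ≤ 5d`, `3d < 10m`,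
`a = 5m - 3c - e`, `b = 5m + a - 3c - e`, twice the virtual dimension of
`L(2m+a; m^4, [b,b-e]^2)` equals `(5m-3c)(45c-71m) + (15c-23m) + 6e(31m-19c-3)`
and is nonnegative. -/
theorem stmt4 (d m c e a b : ℤ) (hde : d = 2 * c + e) (he : e = 0 ∨ e = 1)
    (hm : 1 ≤ m) (h1 : 16 * m ≤ 5 * d) (h2 : 3 * d < 10 * m)
    (ha : a = 5 * m - 3 * c - e) (hb : b = 5 * m + a - 3 * c - e) :
    (2*m + a) * (2*m + a + 3) - 4 * m * (m + 1)
        - 2 * b * (b + 1) - 2 * (b - e) * (b - e + 1)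
      = (5*m - 3*c) * (45*c - 71*m) + (15*c - 23*m) + 6 * e * (31*m - 19*c - 3) ∧
    0 ≤ (2*m + a) * (2*m + a + 3) - 4 * m * (m + 1)
        - 2 * b * (b + 1) - 2 * (b - e) * (b - e + 1) :=
  stmt4_general d m c e a b hde he h1 h2 ha hb
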